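/- Let P be a convex subset of the density operators on ℂ^d that is strictly convex (every proper convex combination of two distinct members lies in the relative interior of P), and suppose the boundary ∂P = P \ relint(P) contains a full-rank density operator. Then for every nonzero traceless selfadjoint Δ there exist ρ ∈ P and λ ∈ ℝ such that ρ + λΔ is a density operator not in P. -/

import Mathlib

open scoped ComplexOrder
open Matrix

def IsDensity {d : ℕ} (ρ : Matrix (Fin d) (Fin d) ℂ) : Prop :=
  ρ.PosSemidef ∧ ρ.trace = 1

lemma quad_continuous {d : ℕ} (M : Matrix (Fin d) (Fin d) ℂ) :
    Continuous fun x : Fin d → ℂ => star x ⬝ᵥ M *ᵥ x := by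
  unfold dotProduct mulVec
  dsimp
  exact continuous_finset_sum _ fun i _ =>
    (Complex.continuous_conj.comp (continuous_apply i)).mul
      (continuous_finset_sum _ fun j _ => continuous_const.mul (continuous_apply j))

lemma quad_im_zero {d : ℕ} {M : Matrix (Fin d) (Fin d) ℂ} (hM : M.IsHermitian) (x : Fin d → ℂ) :
    (star x ⬝ᵥ M *ᵥ x).im = 0 := by
  rw [← Complex.conj_eq_iff_im, ← Complex.star_def]
  conv_lhs => rw [star_dotProduct, star_star, star_mulVec, ← dotProduct_mulVec, hM.eq]

lemma quad_smul {d : ℕ} (M : Matrix (Fin d) (Fin d) ℂ) (c : ℂ) (x : Fin d → ℂ) :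
    star (c • x) ⬝ᵥ M *ᵥ (c • x) = ((starRingEnd ℂ) c * c) * (star x ⬝ᵥ M *ᵥ x) := by
  rw [star_smul, mulVec_smul, smul_dotProduct, dotProduct_smul]
  simp [smul_smul, mul_assoc, Complex.star_def]

lemma exists_perturb {d : ℕ} (hd : 0 < d) {ρ Δ : Matrix (Fin d) (Fin d) ℂ}
    (hρ : ρ.PosDef) (hΔ : Δ.IsHermitian) :
    ∃ ε : ℝ, 0 < ε ∧ ∀ t : ℝ, |t| ≤ ε → (ρ + t • Δ).PosDef := by
  set f : (Fin d → ℂ) → ℝ := fun x => (star x ⬝ᵥ ρ *ᵥ x).re with hf_def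
  set g : (Fin d → ℂ) → ℝ := fun x => |(star x ⬝ᵥ Δ *ᵥ x).re| with hg_def
  have hf : Continuous f := Complex.continuous_re.comp (quad_continuous ρ)
  have hg : Continuous g := (Complex.continuous_re.comp (quad_continuous Δ)).abs
  set S : Set (Fin d → ℂ) := Metric.sphere 0 1 with hS_def
  have hScpt : IsCompact S := isCompact_sphere _ _
  have hSne : S.Nonempty := by
    have : ((fun _ => 1 : Fin d → ℂ)) ≠ 0 := by
      intro h
      have := congrFun h ⟨0, hd⟩
      simp at this
    refine ⟨(‖(fun _ => 1 : Fin d → ℂ)‖⁻¹ : ℝ) • (fun _ => 1 : Fin d → ℂ), ?_⟩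
    simp [hS_def, norm_smul, abs_of_nonneg, inv_mul_cancel₀, norm_ne_zero_iff.mpr this]
  obtain ⟨u, huS, hmin⟩ := hScpt.exists_isMinOn hSne hf.continuousOn
  obtain ⟨v, hvS, hmax⟩ := hScpt.exists_isMaxOn hSne hg.continuousOn
  have hu0 : u ≠ 0 := by
    intro h
    rw [hS_def, mem_sphere_zero_iff_norm] at huS
    simp [h] at huS
  have hc : 0 < f u := by
    have := hρ.dotProduct_mulVec_pos hu0
    rw [Complex.lt_def] at this
    simpa using this.1
  have hC : 0 ≤ g v := abs_nonneg _
  refine ⟨f u / (g v + 1), div_pos hc (by linarith), fun t ht => ?_⟩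
  refine Matrix.PosDef.of_dotProduct_mulVec_pos ?_ ?_
  · simp [Matrix.IsHermitian, conjTranspose_smul, hΔ.eq, hρ.1.eq]
  · intro x hx
    have hn : 0 < ‖x‖ := norm_pos_iff.mpr hx
    set w : Fin d → ℂ := ((‖x‖⁻¹ : ℝ) : ℂ) • x with hw_def
    have hwS : w ∈ S := by
      rw [hS_def, mem_sphere_zero_iff_norm, hw_def, norm_smul]
      simp [abs_of_nonneg (le_of_lt (inv_pos.mpr hn)), inv_mul_cancel₀ hn.ne']
    have hxw : x = ((‖x‖ : ℝ) : ℂ) • w := by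
      rw [hw_def, smul_smul, ← Complex.ofReal_mul, mul_inv_cancel₀ hn.ne']
      simp
    have hqρ : (star x ⬝ᵥ ρ *ᵥ x).re = ‖x‖ ^ 2 * f w := by
      conv_lhs => rw [hxw, quad_smul]
      simp [hf_def, ← Complex.ofReal_mul, sq]
    have hqΔ : (star x ⬝ᵥ Δ *ᵥ x).re = ‖x‖ ^ 2 * (star w ⬝ᵥ Δ *ᵥ w).re := by
      conv_lhs => rw [hxw, quad_smul]
      simp [← Complex.ofReal_mul, sq]
    have hsplit : star x ⬝ᵥ (ρ + t • Δ) *ᵥ x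
        = star x ⬝ᵥ ρ *ᵥ x + (t : ℂ) * (star x ⬝ᵥ Δ *ᵥ x) := by
      rw [add_mulVec, dotProduct_add, smul_mulVec, dotProduct_smul]
      norm_num [Complex.real_smul]
    have him : (star x ⬝ᵥ (ρ + t • Δ) *ᵥ x).im = 0 := by
      apply quad_im_zero
      simp [Matrix.IsHermitian, conjTranspose_smul, hΔ.eq, hρ.1.eq]
    have hre : 0 < (star x ⬝ᵥ (ρ + t • Δ) *ᵥ x).re := by
      rw [hsplit]
      simp only [Complex.add_re, Complex.mul_re, Complex.ofReal_re, Complex.ofReal_im]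
      rw [quad_im_zero hΔ x]
      ring_nf
      rw [hqρ, hqΔ]
      have h1 : f u ≤ f w := hmin hwS
      have h2 : |(star w ⬝ᵥ Δ *ᵥ w).re| ≤ g v := hmax hwS
      have h3 : |t * (star w ⬝ᵥ Δ *ᵥ w).re| ≤ (f u / (g v + 1)) * g v := by
        rw [abs_mul]
        exact mul_le_mul ht h2 (abs_nonneg _) (le_of_lt (div_pos hc (by linarith)))
      have h4 : (f u / (g v + 1)) * g v < f u := by
        rw [div_mul_eq_mul_div, div_lt_iff₀ (by linarith)]
        nlinarith
      have h5 : -(t * (star w ⬝ᵥ Δ *ᵥ w).re) ≤ (f u / (g v + 1)) * g v :=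
        (neg_le_abs _).trans h3
      have hx2 : 0 < ‖x‖ ^ 2 := by positivity
      nlinarith [mul_le_mul_of_nonneg_left h5 hx2.le, mul_lt_mul_of_pos_left h4 hx2,
        mul_le_mul_of_nonneg_left h1 hx2.le]
    rw [Complex.lt_def]
    simp [him, hre]

theorem stmt5 {d : ℕ} (P : Set (Matrix (Fin d) (Fin d) ℂ))
    (hPsub : P ⊆ {ρ | IsDensity ρ})
    (hPconv : Convex ℝ P)
    (hstrict : ∀ x ∈ P, ∀ y ∈ P, x ≠ y → ∀ t : ℝ, 0 < t → t < 1 →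
      t • x + (1 - t) • y ∈ intrinsicInterior ℝ P)
    (hbnd : ∃ ρ ∈ P \ intrinsicInterior ℝ P, Matrix.PosDef ρ) :
    ∀ Δ : Matrix (Fin d) (Fin d) ℂ, Δ.IsHermitian → Δ.trace = 0 → Δ ≠ 0 →
      ∃ ρ ∈ P, ∃ l : ℝ, IsDensity (ρ + l • Δ) ∧ ρ + l • Δ ∉ P := by
  intro Δ hΔh hΔtr hΔne
  -- d is positive, else Δ = 0
  have hd : 0 < d := by
    by_contra h
    push_neg at h
    interval_cases d
    exact hΔne (Subsingleton.elim Δ 0)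
  obtain ⟨ρ₀, ⟨hρ₀P, hρ₀b⟩, hρ₀pd⟩ := hbnd
  obtain ⟨ε, hεpos, hεpd⟩ := exists_perturb hd hρ₀pd hΔh
  have htr : ∀ t : ℝ, (ρ₀ + t • Δ).trace = 1 := by
    intro t
    have h1 : ρ₀.trace = 1 := (hPsub hρ₀P).2
    rw [trace_add, trace_smul, hΔtr, h1]
    simp
  have hden : ∀ t : ℝ, |t| ≤ ε → IsDensity (ρ₀ + t • Δ) := fun t ht =>
    ⟨(hεpd t ht).posSemidef, htr t⟩
  by_cases hp : ρ₀ + ε • Δ ∈ P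
  · by_cases hm : ρ₀ + (-ε) • Δ ∈ P
    · exfalso
      -- ρ₀ is the midpoint, so it would be in the intrinsic interior
      have hne : ρ₀ + ε • Δ ≠ ρ₀ + (-ε) • Δ := by
        intro h
        apply hΔne
        have h2 : (2 * ε) • Δ = 0 := by
          have := sub_eq_zero.mpr h
          rw [add_sub_add_left_eq_sub, ← sub_smul] at this
          convert this using 2
          ring
        rcases smul_eq_zero.mp h2 with h3 | h3
        · exact absurd h3 (by positivity)
        · exact h3
      have := hstrict _ hp _ hm hne (1/2) (by norm_num) (by norm_num)
      have hmid : (1/2 : ℝ) • (ρ₀ + ε • Δ) + (1 - 1/2 : ℝ) • (ρ₀ + (-ε) • Δ) = ρ₀ := by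
        norm_num
        module
      rw [hmid] at this
      exact hρ₀b this
    · exact ⟨ρ₀, hρ₀P, -ε, hden (-ε) (by rw [abs_neg, abs_of_pos hεpos]), hm⟩
  · exact ⟨ρ₀, hρ₀P, ε, hden ε (by rw [abs_of_pos hεpos]), hp⟩
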